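/- Let w : ℤ → ℂ satisfy |w(n)| ≤ K for all n ∈ ℤ, and suppose w is arithmetic with constant C, i.e. |Σ_{a≡0 (mod ℓ)} 𝒞_{w_H}(a) − (1/ℓ)·Σ_{a∈ℤ} 𝒞_{w_H}(a)| ≤ C·H for every positive integer H and every 1 ≤ ℓ ≤ 2H. Then the normalized correlation 𝒞_{w_H}/H is also arithmetic; precisely, there exists C′ > 0 (depending only on K and C) such that for every positive integer H and every 1 ≤ q ≤ 2H, (1/(q·H²))·Σ_{j=1}^{q−1} |ŵ_H(j/q)|⁴ ≤ C′·H. -/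

import Mathlib

/-!
Expanding `|ŵ_H(α)|²` gives the trigonometric polynomial `Σ_a 𝒞_{w_H}(a) e(aα)`, and averaging it
over `α = j/q`, `0 ≤ j < q`, keeps exactly the terms with `q ∣ a`. Removing the `j = 0` term
`Σ_a 𝒞_{w_H}(a)` shows that `Σ_{j=1}^{q-1} |ŵ_H(j/q)|²` is `q` times the quantity bounded by the
arithmeticity hypothesis with `ℓ = q`, hence at most `qCH`. With the trivial bound
`|ŵ_H| ≤ (2H+1)K ≤ 3HK`, the fourth moment is at most `9H²K² · qCH`.
-/

/-- `e(t) = e^{2πit}`. -/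
noncomputable def eC (t : ℝ) : ℂ := Complex.exp (2 * Real.pi * Complex.I * t)

/-- The restriction `w_H` of a weight `w` to `[-H,H]`. -/
noncomputable def wres (w : ℤ → ℂ) (H : ℕ) (a : ℤ) : ℂ := if |a| ≤ (H : ℤ) then w a else 0

/-- The discrete Fourier transform `ŵ_H(α) = Σ_{|a|≤H} w(a) e(aα)`. -/
noncomputable def dft (w : ℤ → ℂ) (H : ℕ) (α : ℝ) : ℂ :=
  ∑ a ∈ Finset.Icc (-(H : ℤ)) (H : ℤ), w a * eC ((a : ℝ) * α)

/-- The correlation `𝒞_{w_H}(a) = Σ_m w_H(m)·conj(w_H(m-a))`. -/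
noncomputable def corrW (w : ℤ → ℂ) (H : ℕ) (a : ℤ) : ℂ :=
  ∑ m ∈ Finset.Icc (-(H : ℤ)) (H : ℤ), wres w H m * (starRingEnd ℂ) (wres w H (m - a))

open Finset ComplexConjugate

lemma eC_add (s t : ℝ) : eC (s + t) = eC s * eC t := by
  rw [eC, eC, eC, ← Complex.exp_add]; push_cast; ring_nf

lemma conj_eC (t : ℝ) : conj (eC t) = eC (-t) := by
  rw [eC, eC, ← Complex.exp_conj]
  simp only [map_mul, Complex.conj_I, Complex.conj_ofReal, map_ofNat]
  push_cast; ring_nf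

lemma norm_eC (t : ℝ) : ‖eC t‖ = 1 := by
  simpa [eC, mul_assoc, mul_comm _ Complex.I] using Complex.norm_exp_ofReal_mul_I (2 * Real.pi * t)

lemma eC_zero : eC 0 = 1 := by simp [eC]

lemma IsPrimitiveRoot.sum_range_zpow_pow {K : Type*} [Field K] {ζ : K} {q : ℕ}
    (hζ : IsPrimitiveRoot ζ q) (a : ℤ) :
    ∑ j ∈ range q, (ζ ^ a) ^ j = if (q : ℤ) ∣ a then (q : K) else 0 := by
  split_ifs with hqa
  · simp [(hζ.zpow_eq_one_iff_dvd a).2 hqa]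
  · have hpow : (ζ ^ a) ^ q = 1 := by
      rw [← zpow_natCast, ← zpow_mul, mul_comm, zpow_mul, zpow_natCast, hζ.pow_eq_one, one_zpow]
    rw [geom_sum_eq (mt (hζ.zpow_eq_one_iff_dvd a).1 hqa), hpow, sub_self, zero_div]

lemma sum_range_eC_mul_div (q : ℕ) (hq : q ≠ 0) (a : ℤ) :
    ∑ j ∈ range q, eC (a * (j / q)) = if (q : ℤ) ∣ a then (q : ℂ) else 0 := by
  have hζ := Complex.isPrimitiveRoot_exp q hq
  rw [← hζ.sum_range_zpow_pow a]
  refine sum_congr rfl fun j _ => ?_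
  rw [← zpow_natCast, ← zpow_mul, ← Complex.exp_int_mul, eC]
  push_cast
  ring_nf

lemma wres_of_lt_abs (w : ℤ → ℂ) {H : ℕ} {n : ℤ} (hn : (H : ℤ) < |n|) : wres w H n = 0 :=
  if_neg hn.not_ge

lemma dft_eq_sum_wres (w : ℤ → ℂ) (H : ℕ) (α : ℝ) :
    dft w H α = ∑ a ∈ Icc (-(H : ℤ)) H, wres w H a * eC (a * α) :=
  sum_congr rfl fun a ha => by rw [wres, if_pos (abs_le.2 (mem_Icc.1 ha))]

lemma sum_Icc_comp_sub_of_support {M : Type*} [AddCommMonoid M] {H : ℕ} {f : ℤ → M}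
    (hf : ∀ n, (H : ℤ) < |n| → f n = 0) {m : ℤ} (hm : |m| ≤ H) :
    ∑ a ∈ Icc (-(2 * H : ℤ)) (2 * H), f (m - a) = ∑ n ∈ Icc (-(H : ℤ)) H, f n := by
  rw [abs_le] at hm
  have hreflect : ∑ a ∈ Icc (-(2 * H : ℤ)) (2 * H), f (m - a) =
      ∑ n ∈ Icc (m - 2 * H) (m + 2 * H), f n :=
    sum_nbij' (m - ·) (m - ·) (fun a ha => by simp only [mem_Icc] at ha ⊢; omega)
      (fun n hn => by simp only [mem_Icc] at hn ⊢; omega) (fun a _ => by ring)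
      (fun n _ => by ring) (fun _ _ => rfl)
  rw [hreflect]
  refine (sum_subset (fun n hn => ?_) fun n _ hn => hf n ?_).symm
  · simp only [mem_Icc] at hn ⊢; omega
  · rw [mem_Icc] at hn; rw [lt_abs]; omega

lemma dft_mul_conj_dft (w : ℤ → ℂ) (H : ℕ) (α : ℝ) :
    dft w H α * conj (dft w H α) =
      ∑ a ∈ Icc (-(2 * H : ℤ)) (2 * H), corrW w H a * eC (a * α) := by
  set g : ℤ → ℂ := fun n => conj (wres w H n * eC (n * α))
  have hg : ∀ n, (H : ℤ) < |n| → g n = 0 := fun n hn => by simp [g, wres_of_lt_abs w hn]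
  have hterm : ∀ m a : ℤ, wres w H m * conj (wres w H (m - a)) * eC (a * α) =
      wres w H m * eC (m * α) * g (m - a) := fun m a => by
    have hsplit : eC (a * α) = eC (m * α) * eC (-(((m - a : ℤ) : ℝ) * α)) := by
      rw [← eC_add]; push_cast; ring_nf
    simp only [g, map_mul, conj_eC, hsplit]
    ring
  simp_rw [corrW, sum_mul, hterm]
  rw [sum_comm, dft_eq_sum_wres, map_sum, sum_mul]
  refine sum_congr rfl fun m hm => ?_
  rw [← mul_sum, sum_Icc_comp_sub_of_support hg (abs_le.2 (mem_Icc.1 hm))]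

lemma sum_range_dft_mul_conj_dft (w : ℤ → ℂ) (H : ℕ) {q : ℕ} (hq : q ≠ 0) :
    ∑ j ∈ range q, dft w H (j / q) * conj (dft w H (j / q)) =
      q * ∑ a ∈ Icc (-(2 * H : ℤ)) (2 * H) with (q : ℤ) ∣ a, corrW w H a := by
  simp_rw [dft_mul_conj_dft, sum_comm (s := range q), ← mul_sum, sum_range_eC_mul_div q hq,
    mul_ite, mul_zero, ← sum_filter, mul_sum, mul_comm]

lemma dft_zero_mul_conj_dft_zero (w : ℤ → ℂ) (H : ℕ) :
    dft w H 0 * conj (dft w H 0) = ∑ a ∈ Icc (-(2 * H : ℤ)) (2 * H), corrW w H a := by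
  simp [dft_mul_conj_dft, eC_zero]

lemma sum_Ico_sq_norm_dft (w : ℤ → ℂ) (H : ℕ) {q : ℕ} (hq : q ≠ 0) :
    ((∑ j ∈ Ico 1 q, ‖dft w H (j / q)‖ ^ 2 : ℝ) : ℂ) =
      q * ((∑ a ∈ Icc (-(2 * H : ℤ)) (2 * H) with (q : ℤ) ∣ a, corrW w H a) -
        1 / q * ∑ a ∈ Icc (-(2 * H : ℤ)) (2 * H), corrW w H a) := by
  have hsum := sum_range_dft_mul_conj_dft w H hq
  rw [sum_range_eq_add_Ico _ (Nat.pos_of_ne_zero hq), Nat.cast_zero, zero_div] at hsum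
  rw [mul_sub, ← hsum, ← dft_zero_mul_conj_dft_zero, ← mul_assoc,
    mul_one_div_cancel (Nat.cast_ne_zero.2 hq), one_mul, add_sub_cancel_left]
  push_cast
  simp_rw [Complex.mul_conj']

lemma sum_Ico_sq_norm_dft_le (w : ℤ → ℂ) (H : ℕ) {q : ℕ} (hq : q ≠ 0) {B : ℝ}
    (hB : ‖(∑ a ∈ Icc (-(2 * H : ℤ)) (2 * H) with (q : ℤ) ∣ a, corrW w H a) -
        1 / q * ∑ a ∈ Icc (-(2 * H : ℤ)) (2 * H), corrW w H a‖ ≤ B) :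
    ∑ j ∈ Ico 1 q, ‖dft w H (j / q)‖ ^ 2 ≤ q * B := by
  have hnonneg : 0 ≤ ∑ j ∈ Ico 1 q, ‖dft w H (j / q)‖ ^ 2 := by positivity
  rw [← Real.norm_of_nonneg hnonneg, ← Complex.norm_real, sum_Ico_sq_norm_dft w H hq, norm_mul,
    Complex.norm_natCast]
  gcongr

lemma norm_dft_le (w : ℤ → ℂ) (H : ℕ) {K : ℝ} (hK : ∀ n, ‖w n‖ ≤ K) (α : ℝ) :
    ‖dft w H α‖ ≤ (2 * H + 1) * K := by
  calc ‖dft w H α‖ ≤ ∑ _a ∈ Icc (-(H : ℤ)) H, K :=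
        norm_sum_le_of_le _ fun a _ => by rw [norm_mul, norm_eC, mul_one]; exact hK a
    _ = (2 * H + 1) * K := by
        have hcard : #(Icc (-(H : ℤ)) H) = 2 * H + 1 := by rw [Int.card_Icc]; omega
        rw [sum_const, hcard, nsmul_eq_mul]
        push_cast
        ring

lemma sum_pow_four_le_sq_mul_sum_sq {ι : Type*} (s : Finset ι) {f : ι → ℝ} {M : ℝ}
    (hf : ∀ i ∈ s, |f i| ≤ M) : ∑ i ∈ s, f i ^ 4 ≤ M ^ 2 * ∑ i ∈ s, f i ^ 2 := by
  rw [mul_sum]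
  refine sum_le_sum fun i hi => ?_
  have hsq : f i ^ 2 ≤ M ^ 2 := by
    simpa only [sq_abs] using pow_le_pow_left₀ (abs_nonneg _) (hf i hi) 2
  calc f i ^ 4 = f i ^ 2 * f i ^ 2 := by ring
    _ ≤ M ^ 2 * f i ^ 2 := mul_le_mul_of_nonneg_right hsq (sq_nonneg _)

theorem stmt10 (K C : ℝ) :
    ∃ C' : ℝ, 0 < C' ∧ ∀ w : ℤ → ℂ,
      (∀ n : ℤ, ‖w n‖ ≤ K) →
      (∀ H : ℕ, 0 < H → ∀ ℓ : ℕ, 1 ≤ ℓ → ℓ ≤ 2 * H →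
        ‖((∑ a ∈ (Finset.Icc (-(2 * H : ℤ)) (2 * H : ℤ)).filter (fun a => (ℓ : ℤ) ∣ a),
              corrW w H a) -
            (1 / (ℓ : ℂ)) * ∑ a ∈ Finset.Icc (-(2 * H : ℤ)) (2 * H : ℤ), corrW w H a)‖ ≤
          C * H) →
      ∀ H : ℕ, 0 < H → ∀ q : ℕ, 1 ≤ q → q ≤ 2 * H →
        (1 / ((q : ℝ) * (H : ℝ) ^ 2)) *
            ∑ j ∈ Finset.Ico 1 q, ‖dft w H ((j : ℝ) / (q : ℝ))‖ ^ 4 ≤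
          C' * H := by
  refine ⟨9 * K ^ 2 * |C| + 1, by positivity, fun w hK hA H hH q hq1 hq2 => ?_⟩
  have hq : q ≠ 0 := by omega
  have hH1 : (1 : ℝ) ≤ H := by exact_mod_cast hH
  have hK0 : 0 ≤ K := (norm_nonneg _).trans (hK 0)
  have hsecond := sum_Ico_sq_norm_dft_le w H hq (hA H hH q hq1 hq2)
  have hfourth := sum_pow_four_le_sq_mul_sum_sq (Ico 1 q) (M := 3 * H * K)
    (f := fun j : ℕ => ‖dft w H (j / q)‖)
    fun j _ => (abs_norm _).trans_le <| (norm_dft_le w H hK _).trans (by nlinarith)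
  calc (1 / ((q : ℝ) * (H : ℝ) ^ 2)) * ∑ j ∈ Ico 1 q, ‖dft w H (j / q)‖ ^ 4
      ≤ (1 / ((q : ℝ) * (H : ℝ) ^ 2)) * ((3 * H * K) ^ 2 * (q * (C * H))) := by
        gcongr
        exact hfourth.trans (mul_le_mul_of_nonneg_left hsecond (sq_nonneg _))
    _ = 9 * K ^ 2 * C * H := by field_simp; ring
    _ ≤ (9 * K ^ 2 * |C| + 1) * H := by
        gcongr
        linarith [mul_le_mul_of_nonneg_left (le_abs_self C) (by positivity : 0 ≤ 9 * K ^ 2)]
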